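/- Let k₊ > k₋ > 0, n := k₋/k₊, θc := arccos n ∈ (0,π/2), and let θ_x ∈ (θc, π/2). Then for every s ∈ ℝ one has √(2/k₊)·e^{−iπ/4}·H_{θc}(s)·H_{π−θc}(s)·√(s − s_b*)·√(s − s_b) = S(cos ζ(s), n). -/

import Mathlib

open Complex Set

noncomputable section

/-- Principal square root on ℂ via the principal power. -/
def csqrt (z : ℂ) : ℂ := z ^ (1/2 : ℂ)

def S1 (z : ℂ) : ℂ := Complex.exp (-(Real.pi : ℂ) / 4 * Complex.I) * csqrt (Complex.I * z)

def S2 (z : ℂ) : ℂ := Complex.exp ((Real.pi : ℂ) / 4 * Complex.I) * csqrt (-Complex.I * z)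

def Sc (z : ℂ) (a : ℝ) : ℂ := S1 (z - (a : ℂ)) * S2 (z + (a : ℂ))

def Sct (z : ℂ) (a : ℝ) : ℂ := S2 (z - (a : ℂ)) * S2 (z + (a : ℂ))

def Pf (kp : ℝ) (s : ℂ) : ℂ := csqrt (1 - s ^ 2 / (2 * (kp : ℂ) * Complex.I))

def Qf (kp : ℝ) (s : ℂ) : ℂ :=
  s * Complex.exp (-(Real.pi : ℂ) / 4 * Complex.I) / (Real.sqrt (2 * kp) : ℂ)

/-- Principal branch of arcsin on ℂ. -/
def arcsinC (w : ℂ) : ℂ := -Complex.I * Complex.log (Complex.I * w + csqrt (1 - w ^ 2))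

def zetaF (kp θx : ℝ) (s : ℂ) : ℂ := 2 * arcsinC (Qf kp s) + (θx : ℂ)

def F1f (kp θx θ : ℝ) (s : ℂ) : ℂ :=
  1 + Pf kp s * (Real.cos ((θ - θx) / 2) : ℂ) + Qf kp s * (Real.sin ((θ - θx) / 2) : ℂ)

def F2f (kp θx θ : ℝ) (s : ℂ) : ℂ :=
  Pf kp s * (Real.sin ((θ + θx) / 2) : ℂ) + Qf kp s * (Real.cos ((θ + θx) / 2) : ℂ)

def F3f (kp θx θ : ℝ) (s : ℂ) : ℂ := (Real.cos ((θ - θx) / 2) : ℂ) + Pf kp s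

def Hth (kp θx θ : ℝ) (s : ℂ) : ℂ :=
  csqrt (F1f kp θx θ s) * csqrt (F2f kp θx θ s) / csqrt (F3f kp θx θ s)

def sb (kp θc θx : ℝ) : ℂ :=
  (Real.sqrt (2 * kp) : ℂ) * Complex.exp ((Real.pi : ℂ) / 4 * Complex.I) *
    (Real.sin ((θc - θx) / 2) : ℂ)

def sbs (kp θc θx : ℝ) : ℂ :=
  (Real.sqrt (2 * kp) : ℂ) * Complex.exp ((Real.pi : ℂ) / 4 * Complex.I) *
    (Real.sin ((Real.pi - θc - θx) / 2) : ℂ)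


/-! Write `A = arcsin Q(s)`, so that `P(s) = cos A` and `Q(s) = sin A`, and put
`α = (θ_x - θc)/2`, `β = (θ_x + θc)/2`, `ω = e^{-iπ/4}`. Since `cos ζ - n = -2 sin(A+α) sin(A+β)`
and `cos ζ + n = 2 cos(A+α) cos(A+β)`, the right side is twice the product of the square roots of
`ω sin(A+α)`, `ω sin(A+β)`, `ω cos(A+α)`, `ω cos(A+β)`. On the left, the identity
`(sin a + sin b)(1 + cos(a+b)) = sin(a+b)(cos a + cos b)` turns `(s - s_b) F¹_{θc}` into a multiple
of `sin(A+α) F³_{θc}` and `(s - s_b*) F¹_{π-θc}` into a multiple of `cos(A+β) F³_{π-θc}`, so the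
`F³` cancel and the same product remains. The branches match because for real `s` the point `Q(s)`
lies on the line `ωℝ`: then every factor, suitably rotated, lies in the right half-plane (one of
them only after a case distinction), where principal square roots are multiplicative. -/

open scoped Real

lemma csqrt_eq_exp {z : ℂ} (hz : z ≠ 0) : csqrt z = exp (log z / 2) := by
  rw [csqrt, cpow_def_of_ne_zero hz]; ring_nf

lemma csqrt_ne_zero {z : ℂ} (hz : z ≠ 0) : csqrt z ≠ 0 := by
  rw [csqrt_eq_exp hz]; exact exp_ne_zero _

lemma csqrt_sq (z : ℂ) : csqrt z ^ 2 = z := by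
  rw [csqrt, one_div]; exact cpow_ofNat_inv_pow z 2

lemma csqrt_mul {x y : ℂ} (hx : x ≠ 0) (hy : y ≠ 0) (h : arg x + arg y ∈ Ioc (-π) π) :
    csqrt (x * y) = csqrt x * csqrt y := by
  rw [csqrt_eq_exp (mul_ne_zero hx hy), csqrt_eq_exp hx, csqrt_eq_exp hy, log_mul hx hy h,
    ← exp_add, add_div]

lemma csqrt_mul_of_re_pos {x y : ℂ} (hx : 0 < x.re) (hy : 0 < y.re) :
    csqrt (x * y) = csqrt x * csqrt y := by
  have hx' := abs_lt.1 (abs_arg_lt_pi_div_two_iff.2 (Or.inl hx))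
  have hy' := abs_lt.1 (abs_arg_lt_pi_div_two_iff.2 (Or.inl hy))
  exact csqrt_mul (ne_zero_of_re_pos hx) (ne_zero_of_re_pos hy)
    ⟨by linarith [hx'.1, hy'.1], by linarith [hx'.2, hy'.2]⟩

lemma csqrt_mul_of_im_pos_of_im_neg {x y : ℂ} (hx : 0 < x.im) (hy : y.im < 0) :
    csqrt (x * y) = csqrt x * csqrt y := by
  have hx0 : x ≠ 0 := fun h ↦ by simp [h] at hx
  have hy0 : y ≠ 0 := fun h ↦ by simp [h] at hy
  exact csqrt_mul hx0 hy0 ⟨by linarith [neg_pi_lt_arg y, arg_nonneg_iff.2 hx.le],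
    by linarith [arg_le_pi x, arg_neg_iff.2 hy]⟩

lemma csqrt_ofReal {r : ℝ} (hr : 0 ≤ r) : csqrt r = Real.sqrt r := by
  rw [csqrt, Real.sqrt_eq_rpow, ofReal_cpow hr]; push_cast; rfl

lemma csqrt_ofReal_mul {r : ℝ} (hr : 0 ≤ r) (z : ℂ) : csqrt (r * z) = Real.sqrt r * csqrt z := by
  rcases hr.eq_or_lt with rfl | hr
  · simp [csqrt]
  rcases eq_or_ne z 0 with rfl | hz
  · simp [csqrt]
  have harg : arg r + arg z ∈ Ioc (-π) π := by
    rw [arg_ofReal_of_nonneg hr.le, zero_add]; exact ⟨neg_pi_lt_arg z, arg_le_pi z⟩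
  rw [csqrt_mul (ofReal_ne_zero.2 hr.ne') hz harg, csqrt_ofReal hr.le]

lemma csqrt_exp_mul_I_mul {θ : ℝ} (hθ : |θ| ≤ π / 2) {z : ℂ} (hz : 0 < z.re) :
    csqrt (exp (θ * I) * z) = exp (θ / 2 * I) * csqrt z := by
  have hpi := Real.pi_pos
  obtain ⟨hθ₁, hθ₂⟩ := abs_le.1 hθ
  obtain ⟨hz₁, hz₂⟩ := abs_lt.1 (abs_arg_lt_pi_div_two_iff.2 (Or.inl hz))
  have harg : arg (exp (θ * I)) = θ := by
    rw [exp_mul_I, arg_cos_add_sin_mul_I ⟨by linarith, by linarith⟩]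
  rw [csqrt_mul (exp_ne_zero _) (ne_zero_of_re_pos hz) (by rw [harg]; constructor <;> linarith),
    csqrt_eq_exp (exp_ne_zero _), log_exp (by rw [mul_I_im, ofReal_re]; linarith)
      (by rw [mul_I_im, ofReal_re]; linarith)]
  ring_nf

lemma re_csqrt_pos {z : ℂ} (hz : 0 < z.re) : 0 < (csqrt z).re := by
  have hpi := Real.pi_pos
  obtain ⟨h₁, h₂⟩ := abs_lt.1 (abs_arg_lt_pi_div_two_iff.2 (Or.inl hz))
  rw [csqrt, show (1 / 2 : ℂ) = ((1 / 2 : ℝ) : ℂ) by push_cast; rfl, cpow_ofReal_re]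
  exact mul_pos (Real.rpow_pos_of_pos (norm_pos_iff.2 (ne_zero_of_re_pos hz)) _)
    (Real.cos_pos_of_mem_Ioo ⟨by linarith, by linarith⟩)

lemma im_csqrt_nonneg {z : ℂ} (hz : 0 ≤ z.im) : 0 ≤ (csqrt z).im := by
  rw [csqrt, show (1 / 2 : ℂ) = ((1 / 2 : ℝ) : ℂ) by push_cast; rfl, cpow_ofReal_im]
  exact mul_nonneg (Real.rpow_nonneg (norm_nonneg _) _)
    (Real.sin_nonneg_of_nonneg_of_le_pi (by linarith [arg_nonneg_iff.2 hz])
      (by linarith [arg_le_pi z, Real.pi_pos]))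

local notation "ω₋" => Complex.exp (-(Real.pi : ℂ) / 4 * Complex.I)
local notation "ω₊" => Complex.exp ((Real.pi : ℂ) / 4 * Complex.I)

lemma ωm_mul_ωp : ω₋ * ω₊ = 1 := by
  rw [← exp_add, ← exp_zero]; ring_nf

lemma ωm_sq : ω₋ ^ 2 = -I := by
  rw [sq, ← exp_add, ← exp_neg_pi_div_two_mul_I]; ring_nf

lemma I_mul_ωm : I * ω₋ = ω₊ := by
  calc I * ω₋ = exp (π / 2 * I) * ω₋ := by rw [exp_pi_div_two_mul_I]
    _ = ω₊ := by rw [← exp_add]; ring_nf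

lemma ωm_eq : ω₋ = (Real.sqrt 2 / 2 : ℝ) * (1 - I) := by
  rw [show -(π : ℂ) / 4 * I = (-(π / 4) : ℝ) * I by push_cast; ring, exp_mul_I, ← ofReal_cos,
    ← ofReal_sin, Real.cos_neg, Real.sin_neg, Real.cos_pi_div_four, Real.sin_pi_div_four]
  push_cast; ring

lemma ωm_re : ω₋.re = Real.sqrt 2 / 2 := by simp [ωm_eq]

lemma ωm_im : ω₋.im = -(Real.sqrt 2 / 2) := by simp [ωm_eq]

lemma re_ωm_mul (z : ℂ) : (ω₋ * z).re = Real.sqrt 2 / 2 * (z.re + z.im) := by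
  rw [mul_re, ωm_re, ωm_im]; ring

lemma im_ωm_mul (z : ℂ) : (ω₋ * z).im = Real.sqrt 2 / 2 * (z.im - z.re) := by
  rw [mul_im, ωm_re, ωm_im]; ring

lemma I_mul_add_csqrt_mul_csqrt_sub_I_mul (w : ℂ) :
    (I * w + csqrt (1 - w ^ 2)) * (csqrt (1 - w ^ 2) - I * w) = 1 := by
  linear_combination csqrt_sq (1 - w ^ 2) - w ^ 2 * I_sq

lemma exp_arcsinC_mul_I (w : ℂ) : exp (arcsinC w * I) = I * w + csqrt (1 - w ^ 2) := by
  rw [arcsinC, show -I * log (I * w + csqrt (1 - w ^ 2)) * I = log (I * w + csqrt (1 - w ^ 2)) by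
    linear_combination (-log (I * w + csqrt (1 - w ^ 2))) * I_sq]
  exact exp_log (left_ne_zero_of_mul_eq_one (I_mul_add_csqrt_mul_csqrt_sub_I_mul w))

lemma exp_neg_arcsinC_mul_I (w : ℂ) : exp (-arcsinC w * I) = csqrt (1 - w ^ 2) - I * w := by
  rw [neg_mul, exp_neg, exp_arcsinC_mul_I]
  exact inv_eq_of_mul_eq_one_right (I_mul_add_csqrt_mul_csqrt_sub_I_mul w)

lemma cos_arcsinC (w : ℂ) : cos (arcsinC w) = csqrt (1 - w ^ 2) := by
  linear_combination two_cos (x := arcsinC w) / 2 + exp_arcsinC_mul_I w / 2 +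
    exp_neg_arcsinC_mul_I w / 2

lemma sin_arcsinC (w : ℂ) : sin (arcsinC w) = w := by
  linear_combination two_sin (x := arcsinC w) / 2 +
    (exp_neg_arcsinC_mul_I w - exp_arcsinC_mul_I w) * I / 2 - w * I_sq

lemma sin_add_sin_mul_one_add_cos_add (a b : ℂ) :
    (sin a + sin b) * (1 + cos (a + b)) = sin (a + b) * (cos a + cos b) := by
  rw [sin_add, cos_add]
  linear_combination -sin b * sin_sq_add_cos_sq a - sin a * sin_sq_add_cos_sq b

lemma csqrt_ωp_mul {z : ℂ} (hz : 0 < z.re) : csqrt (ω₊ * z) = exp (π / 8 * I) * csqrt z := by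
  have h := csqrt_exp_mul_I_mul (θ := π / 4)
    (by rw [abs_of_pos (by positivity)]; linarith [Real.pi_pos]) hz
  push_cast at h
  rw [show (π : ℂ) / 4 * I = π / 4 * I by ring, h]; ring_nf

lemma csqrt_I_mul {z : ℂ} (hz : 0 < z.re) : csqrt (I * z) = ω₊ * csqrt z := by
  have h := csqrt_exp_mul_I_mul (θ := π / 2) (by rw [abs_of_pos (by positivity)]) hz
  push_cast at h
  rw [exp_pi_div_two_mul_I] at h
  rw [h]; ring_nf

lemma csqrt_neg_I_mul {z : ℂ} (hz : 0 < z.re) : csqrt (-I * z) = ω₋ * csqrt z := by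
  have h := csqrt_exp_mul_I_mul (θ := -(π / 2)) (by rw [abs_neg, abs_of_pos (by positivity)]) hz
  push_cast at h
  rw [show -((π : ℂ) / 2) * I = -π / 2 * I by ring, exp_neg_pi_div_two_mul_I] at h
  rw [h]; ring_nf

section DiagonalArgument

/- The hypothesis `Q.im = -Q.re` says `Q ∈ e^{-iπ/4}ℝ`, as holds for `Qf kp s` with `s` real.
Then `1 - Q^2 = 1 + 2i (Re Q)^2`, so `P = csqrt (1 - Q^2)` has `Re P > 0`, `Im P ≥ 0` and
`(Re P)(Im P) = (Re Q)^2`, while `ω₋ * Q` is purely imaginary. -/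

variable {Q : ℂ}

lemma re_csqrt_one_sub_sq_pos (hQ : Q.im = -Q.re) : 0 < (csqrt (1 - Q ^ 2)).re :=
  re_csqrt_pos (by simp [sq, hQ])

lemma im_csqrt_one_sub_sq_nonneg (hQ : Q.im = -Q.re) : 0 ≤ (csqrt (1 - Q ^ 2)).im :=
  im_csqrt_nonneg (by simpa [sq, hQ] using mul_self_nonneg Q.re)

lemma abs_re_lt_re_csqrt_one_sub_sq (hQ : Q.im = -Q.re) : |Q.re| < (csqrt (1 - Q ^ 2)).re := by
  set P := csqrt (1 - Q ^ 2)
  have hp := re_csqrt_one_sub_sq_pos hQ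
  have hq := im_csqrt_one_sub_sq_nonneg hQ
  have hP : P ^ 2 = 1 - Q ^ 2 := csqrt_sq _
  have hre : P.re ^ 2 - P.im ^ 2 = 1 := by
    have := congrArg re hP
    rw [sq, sq, mul_re, sub_re, one_re, mul_re, hQ] at this
    linarith
  have him : P.re * P.im = Q.re ^ 2 := by
    have := congrArg im hP
    rw [sq, sq, mul_im, sub_im, one_im, mul_im, hQ] at this
    linarith
  have hqp : P.im < P.re := by nlinarith
  exact abs_lt_of_sq_lt_sq (by nlinarith) hp.le

lemma re_ωm_mul_sin_arcsinC_add_pos (hQ : Q.im = -Q.re) {α : ℝ} (hα : 0 < Real.sin α) :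
    0 < (ω₋ * sin (arcsinC Q + α)).re := by
  have hp := re_csqrt_one_sub_sq_pos hQ
  have hq := im_csqrt_one_sub_sq_nonneg hQ
  rw [sin_add, sin_arcsinC, cos_arcsinC, ← ofReal_cos, ← ofReal_sin, re_ωm_mul]
  simp only [add_re, add_im, re_mul_ofReal, im_mul_ofReal, hQ]
  have : 0 < Real.sqrt 2 := by positivity
  nlinarith [mul_pos this (mul_pos hα (add_pos_of_pos_of_nonneg hp hq))]

lemma re_ωm_mul_cos_arcsinC_add_pos (hQ : Q.im = -Q.re) {α : ℝ} (hα : 0 < Real.cos α) :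
    0 < (ω₋ * cos (arcsinC Q + α)).re := by
  have hp := re_csqrt_one_sub_sq_pos hQ
  have hq := im_csqrt_one_sub_sq_nonneg hQ
  rw [cos_add, sin_arcsinC, cos_arcsinC, ← ofReal_cos, ← ofReal_sin, re_ωm_mul]
  simp only [sub_re, sub_im, re_mul_ofReal, im_mul_ofReal, hQ]
  have : 0 < Real.sqrt 2 := by positivity
  nlinarith [mul_pos this (mul_pos hα (add_pos_of_pos_of_nonneg hp hq))]

lemma re_ωm_mul_add_ofReal_pos (hQ : Q.im = -Q.re) {x : ℝ} (hx : 0 < x) :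
    0 < (ω₋ * (Q + x)).re := by
  rw [re_ωm_mul, add_re, add_im, ofReal_re, ofReal_im, hQ]; ring_nf; positivity

lemma re_ωm_mul_ofReal_sub_pos (hQ : Q.im = -Q.re) {x : ℝ} (hx : 0 < x) :
    0 < (ω₋ * (x - Q)).re := by
  rw [re_ωm_mul, sub_re, sub_im, ofReal_re, ofReal_im, hQ]; ring_nf; positivity

lemma re_ofReal_add_cos_arcsinC_pos (hQ : Q.im = -Q.re) {x : ℝ} (hx : 0 ≤ x) :
    0 < (x + cos (arcsinC Q)).re := by
  rw [cos_arcsinC, add_re, ofReal_re]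
  linarith [re_csqrt_one_sub_sq_pos hQ]

lemma re_one_add_cos_arcsinC_add_pos (hQ : Q.im = -Q.re) {α : ℝ} (h₀ : 0 ≤ Real.sin α)
    (h₁ : Real.sin α ≤ Real.cos α) : 0 < (1 + cos (arcsinC Q + α)).re := by
  have hQP := abs_re_lt_re_csqrt_one_sub_sq hQ
  rw [cos_add, sin_arcsinC, cos_arcsinC, ← ofReal_cos, ← ofReal_sin]
  simp only [add_re, one_re, sub_re, re_mul_ofReal]
  nlinarith [mul_le_mul_of_nonneg_right ((le_abs_self Q.re).trans hQP.le) h₀,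
    mul_le_mul_of_nonneg_left h₁ ((abs_nonneg _).trans hQP.le)]

lemma csqrt_mul_one_add_sin_arcsinC_add (hQ : Q.im = -Q.re) {β : ℝ} (hs : 0 < Real.sin β)
    (hc : 0 < Real.cos β) :
    csqrt (ω₋ * (Real.cos β - Q) * (1 + sin (arcsinC Q + β)))
      = csqrt (ω₋ * (Real.cos β - Q)) * csqrt (1 + sin (arcsinC Q + β)) := by
  have hp := re_csqrt_one_sub_sq_pos hQ
  have hq := im_csqrt_one_sub_sq_nonneg hQ
  have hsin : sin (arcsinC Q + β) = Q * Real.cos β + csqrt (1 - Q ^ 2) * Real.sin β := by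
    rw [sin_add, sin_arcsinC, cos_arcsinC, ofReal_cos, ofReal_sin]
  -- For `Re Q < 0`, `1 + sin (arcsinC Q + β)` may leave the right half-plane, but then it lies
  -- in the upper one while `ω₋ * (cos β - Q)` lies in the lower one.
  rcases le_or_gt 0 Q.re with hτ | hτ
  · refine csqrt_mul_of_re_pos (re_ωm_mul_ofReal_sub_pos hQ hc) ?_
    rw [hsin]
    simp only [add_re, one_re, re_mul_ofReal]
    nlinarith [mul_nonneg hτ hc.le, mul_pos hp hs]
  · rw [mul_comm, csqrt_mul_of_im_pos_of_im_neg, mul_comm]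
    · rw [hsin]
      simp only [add_im, one_im, im_mul_ofReal, hQ]
      nlinarith [mul_pos (neg_pos.2 hτ) hc, mul_nonneg hq hs.le]
    · rw [im_ωm_mul]
      simp only [sub_im, sub_re, ofReal_im, ofReal_re, hQ]
      have : 0 < Real.sqrt 2 := by positivity
      nlinarith [mul_pos this hc, mul_pos this (neg_pos.2 hτ)]

end DiagonalArgument

lemma ωm_mul_add_sin_mul_one_add_cos_arcsinC_add (Q : ℂ) (α : ℝ) :
    ω₋ * (Q + Real.sin α) * (1 + cos (arcsinC Q + α))
      = ω₋ * sin (arcsinC Q + α) * (Real.cos α + cos (arcsinC Q)) := by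
  have h := sin_add_sin_mul_one_add_cos_add (arcsinC Q) α
  rw [sin_arcsinC] at h
  push_cast
  linear_combination ω₋ * h

lemma ωm_mul_cos_sub_mul_one_add_sin_arcsinC_add (Q : ℂ) (β : ℝ) :
    ω₋ * (Real.cos β - Q) * (1 + sin (arcsinC Q + β))
      = ω₋ * cos (arcsinC Q + β) * (Real.sin β + cos (arcsinC Q)) := by
  have h := sin_add_sin_mul_one_add_cos_add (-arcsinC Q) (π / 2 - β)
  rw [show -arcsinC Q + (π / 2 - β) = π / 2 - (arcsinC Q + β) by ring] at h
  simp only [sin_neg, cos_neg, sin_pi_div_two_sub, cos_pi_div_two_sub, sin_arcsinC] at h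
  push_cast
  linear_combination ω₋ * h

lemma lhs_normalized_eq_prod_csqrt (Q : ℂ) (hQ : Q.im = -Q.re) {α β : ℝ}
    (hα₀ : 0 < Real.sin α) (hα₁ : Real.sin α < Real.cos α) (hβs : 0 < Real.sin β)
    (hβc : 0 < Real.cos β) :
    ω₋ * (csqrt (1 + cos (arcsinC Q + α)) * csqrt (sin (arcsinC Q + β))
          / csqrt (Real.cos α + cos (arcsinC Q))) *
        (csqrt (1 + sin (arcsinC Q + β)) * csqrt (cos (arcsinC Q + α))
          / csqrt (Real.sin β + cos (arcsinC Q))) *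
        (ω₋ * csqrt (ω₋ * (Real.cos β - Q))) * (ω₊ * csqrt (ω₋ * (Q + Real.sin α)))
      = csqrt (ω₋ * sin (arcsinC Q + α)) * csqrt (ω₋ * sin (arcsinC Q + β)) *
          (csqrt (ω₋ * cos (arcsinC Q + α)) * csqrt (ω₋ * cos (arcsinC Q + β))) := by
  have hcα : 0 < Real.cos α := hα₀.trans hα₁
  have hDα := csqrt_ne_zero (ne_zero_of_re_pos (re_ofReal_add_cos_arcsinC_pos hQ hcα.le))
  have hDβ := csqrt_ne_zero (ne_zero_of_re_pos (re_ofReal_add_cos_arcsinC_pos hQ hβs.le))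
  have hsβ := re_ωm_mul_sin_arcsinC_add_pos hQ hβs
  have hcα' := re_ωm_mul_cos_arcsinC_add_pos hQ hcα
  set A := arcsinC Q
  have hrootα : csqrt (ω₋ * (Q + Real.sin α)) * csqrt (1 + cos (A + α))
      = csqrt (ω₋ * sin (A + α)) * csqrt (Real.cos α + cos A) := by
    rw [← csqrt_mul_of_re_pos (re_ωm_mul_add_ofReal_pos hQ hα₀)
        (re_one_add_cos_arcsinC_add_pos hQ hα₀.le hα₁.le),
      ← csqrt_mul_of_re_pos (re_ωm_mul_sin_arcsinC_add_pos hQ hα₀)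
        (re_ofReal_add_cos_arcsinC_pos hQ hcα.le),
      ωm_mul_add_sin_mul_one_add_cos_arcsinC_add]
  have hrootβ : csqrt (ω₋ * (Real.cos β - Q)) * csqrt (1 + sin (A + β))
      = csqrt (ω₋ * cos (A + β)) * csqrt (Real.sin β + cos A) := by
    rw [← csqrt_mul_one_add_sin_arcsinC_add hQ hβs hβc,
      ← csqrt_mul_of_re_pos (re_ωm_mul_cos_arcsinC_add_pos hQ hβc)
        (re_ofReal_add_cos_arcsinC_pos hQ hβs.le),
      ωm_mul_cos_sub_mul_one_add_sin_arcsinC_add]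
  have hrot : ∀ z : ℂ, 0 < (ω₋ * z).re → csqrt z = exp (π / 8 * I) * csqrt (ω₋ * z) :=
    fun z hz ↦ by rw [← csqrt_ωp_mul hz, ← mul_assoc, mul_comm ω₊, ωm_mul_ωp, one_mul]
  have hε : exp (π / 8 * I) ^ 2 = ω₊ := by rw [← exp_nat_mul]; ring_nf
  rw [hrot _ hsβ, hrot _ hcα']
  calc _ = (ω₋ * ω₊) * (ω₋ * exp (π / 8 * I) ^ 2)
          * (csqrt (ω₋ * (Q + Real.sin α)) * csqrt (1 + cos (A + α)))
          * (csqrt (ω₋ * (Real.cos β - Q)) * csqrt (1 + sin (A + β)))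
          * csqrt (ω₋ * sin (A + β)) * csqrt (ω₋ * cos (A + α))
          / (csqrt (Real.cos α + cos A) * csqrt (Real.sin β + cos A)) := by ring
    _ = _ := by
      rw [hrootα, hrootβ, hε, ωm_mul_ωp, one_mul, one_mul]
      field_simp

lemma Sc_cos_two_mul_add (A : ℂ) (α β : ℝ)
    (hsα : 0 < (ω₋ * sin (A + α)).re) (hsβ : 0 < (ω₋ * sin (A + β)).re)
    (hcα : 0 < (ω₋ * cos (A + α)).re) (hcβ : 0 < (ω₋ * cos (A + β)).re) :
    Sc (cos (2 * A + (β + α))) (Real.cos (β - α)) =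
      2 * (csqrt (ω₋ * sin (A + α)) * csqrt (ω₋ * sin (A + β))) *
        (csqrt (ω₋ * cos (A + α)) * csqrt (ω₋ * cos (A + β))) := by
  have hsub : I * (cos (2 * A + (β + α)) - (Real.cos (β - α) : ℝ))
      = (2 : ℝ) * (ω₋ * sin (A + α) * (ω₋ * sin (A + β))) := by
    rw [ofReal_cos, cos_sub_cos, show (2 * A + (β + α) + ↑(β - α)) / 2 = A + β by push_cast; ring,
      show (2 * A + (β + α) - ↑(β - α)) / 2 = A + α by push_cast; ring]
    push_cast
    linear_combination (-2 * sin (A + α) * sin (A + β)) * ωm_sq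
  have hadd : -I * (cos (2 * A + (β + α)) + (Real.cos (β - α) : ℝ))
      = (2 : ℝ) * (ω₋ * cos (A + α) * (ω₋ * cos (A + β))) := by
    rw [ofReal_cos, cos_add_cos, show (2 * A + (β + α) + ↑(β - α)) / 2 = A + β by push_cast; ring,
      show (2 * A + (β + α) - ↑(β - α)) / 2 = A + α by push_cast; ring]
    push_cast
    linear_combination (-2 * cos (A + α) * cos (A + β)) * ωm_sq
  have hsqrt2 : ((Real.sqrt 2 : ℝ) : ℂ) * (Real.sqrt 2 : ℝ) = 2 := by
    rw [← ofReal_mul, Real.mul_self_sqrt zero_le_two]; norm_num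
  rw [Sc, S1, S2, hsub, hadd, csqrt_ofReal_mul zero_le_two, csqrt_ofReal_mul zero_le_two,
    csqrt_mul_of_re_pos hsα hsβ, csqrt_mul_of_re_pos hcα hcβ]
  set X := csqrt (ω₋ * sin (A + α)) * csqrt (ω₋ * sin (A + β))
  set Y := csqrt (ω₋ * cos (A + α)) * csqrt (ω₋ * cos (A + β))
  linear_combination (2 * X * Y) * ωm_mul_ωp + ω₋ * ω₊ * X * Y * hsqrt2

section Model

variable {kp : ℝ}

lemma Qf_eq (s : ℂ) : Qf kp s = ω₋ * (s / Real.sqrt (2 * kp)) := by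
  rw [Qf]; ring

lemma Qf_im (s : ℝ) : (Qf kp s).im = -(Qf kp s).re := by
  rw [Qf_eq, ← ofReal_div, re_ωm_mul, im_ωm_mul, ofReal_re, ofReal_im]; ring

lemma Pf_eq_cos_arcsinC (hkp : 0 < kp) (s : ℂ) : Pf kp s = cos (arcsinC (Qf kp s)) := by
  have h : ((Real.sqrt (2 * kp) : ℝ) : ℂ) ^ 2 = 2 * kp := by
    rw [← ofReal_pow, Real.sq_sqrt (by positivity)]; push_cast; ring
  have hkp' : (kp : ℂ) ≠ 0 := ofReal_ne_zero.2 hkp.ne'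
  rw [cos_arcsinC, Pf, Qf_eq, mul_pow, div_pow, h, ωm_sq]
  congr 1
  field_simp
  linear_combination (-s ^ 2) * I_sq

lemma ofReal_eq_Qf (hkp : 0 < kp) (s : ℂ) : s = Real.sqrt (2 * kp) * ω₊ * Qf kp s := by
  have h : ((Real.sqrt (2 * kp) : ℝ) : ℂ) ≠ 0 := ofReal_ne_zero.2 (by positivity)
  rw [Qf_eq, show (Real.sqrt (2 * kp) : ℂ) * ω₊ * (ω₋ * (s / Real.sqrt (2 * kp)))
      = ω₋ * ω₊ * (Real.sqrt (2 * kp) * (s / Real.sqrt (2 * kp))) by ring, ωm_mul_ωp, one_mul,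
    mul_div_cancel₀ _ h]

lemma Hth_eq (hkp : 0 < kp) (θx θ : ℝ) (s : ℂ) :
    Hth kp θx θ s = csqrt (1 + cos (arcsinC (Qf kp s) - ((θ - θx) / 2 : ℝ)))
      * csqrt (sin (arcsinC (Qf kp s) + ((θ + θx) / 2 : ℝ)))
      / csqrt (Real.cos ((θ - θx) / 2) + cos (arcsinC (Qf kp s))) := by
  rw [Hth, F1f, F2f, F3f, cos_sub, sin_add, Pf_eq_cos_arcsinC hkp, sin_arcsinC, ofReal_cos,
    ofReal_sin, ofReal_cos, ofReal_sin]
  ring_nf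

lemma Hth_sub_eq (hkp : 0 < kp) (α β : ℝ) (s : ℂ) :
    Hth kp (β + α) (β - α) s = csqrt (1 + cos (arcsinC (Qf kp s) + α))
      * csqrt (sin (arcsinC (Qf kp s) + β)) / csqrt (Real.cos α + cos (arcsinC (Qf kp s))) := by
  rw [Hth_eq hkp, show (β - α - (β + α)) / 2 = -α by ring, show (β - α + (β + α)) / 2 = β by ring,
    Real.cos_neg]
  push_cast; ring_nf

lemma Hth_pi_sub_eq (hkp : 0 < kp) (α β : ℝ) (s : ℂ) :
    Hth kp (β + α) (π - (β - α)) s = csqrt (1 + sin (arcsinC (Qf kp s) + β))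
      * csqrt (cos (arcsinC (Qf kp s) + α)) / csqrt (Real.sin β + cos (arcsinC (Qf kp s))) := by
  rw [Hth_eq hkp, show (π - (β - α) - (β + α)) / 2 = π / 2 - β by ring,
    show (π - (β - α) + (β + α)) / 2 = π / 2 + α by ring, Real.cos_pi_div_two_sub]
  push_cast
  rw [show arcsinC (Qf kp s) - (π / 2 - β) = -(π / 2 - (arcsinC (Qf kp s) + β)) by ring,
    show arcsinC (Qf kp s) + (π / 2 + α) = π / 2 - (-(arcsinC (Qf kp s) + α)) by ring,
    cos_neg, cos_pi_div_two_sub, sin_pi_div_two_sub, cos_neg]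

lemma csqrt_sub_sb (hkp : 0 < kp) {α : ℝ} (hα : 0 < Real.sin α) (β s : ℝ) :
    csqrt (s - sb kp (β - α) (β + α))
      = Real.sqrt (Real.sqrt (2 * kp)) * (ω₊ * csqrt (ω₋ * (Qf kp s + Real.sin α))) := by
  have h : (s : ℂ) - sb kp (β - α) (β + α)
      = Real.sqrt (2 * kp) * (I * (ω₋ * (Qf kp s + Real.sin α))) := by
    rw [sb, show (β - α - (β + α)) / 2 = -α by ring, Real.sin_neg, ← I_mul_ωm]
    nth_rewrite 1 [ofReal_eq_Qf hkp s]
    rw [← I_mul_ωm]; push_cast; ring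
  rw [h, csqrt_ofReal_mul (Real.sqrt_nonneg _),
    csqrt_I_mul (re_ωm_mul_add_ofReal_pos (Qf_im s) hα)]

lemma csqrt_sub_sbs (hkp : 0 < kp) (α : ℝ) {β : ℝ} (hβ : 0 < Real.cos β) (s : ℝ) :
    csqrt (s - sbs kp (β - α) (β + α))
      = Real.sqrt (Real.sqrt (2 * kp)) * (ω₋ * csqrt (ω₋ * (Real.cos β - Qf kp s))) := by
  have h : (s : ℂ) - sbs kp (β - α) (β + α)
      = Real.sqrt (2 * kp) * (-I * (ω₋ * (Real.cos β - Qf kp s))) := by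
    rw [sbs, show (π - (β - α) - (β + α)) / 2 = π / 2 - β by ring, Real.sin_pi_div_two_sub]
    nth_rewrite 1 [ofReal_eq_Qf hkp s]
    rw [← I_mul_ωm]; ring
  rw [h, csqrt_ofReal_mul (Real.sqrt_nonneg _),
    csqrt_neg_I_mul (re_ωm_mul_ofReal_sub_pos (Qf_im s) hβ)]

end Model

lemma sqrt_two_div_mul_sqrt_sqrt_two_mul_mul_self {kp : ℝ} (hkp : 0 < kp) :
    Real.sqrt (2 / kp) * (Real.sqrt (Real.sqrt (2 * kp)) * Real.sqrt (Real.sqrt (2 * kp))) = 2 := by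
  rw [Real.mul_self_sqrt (Real.sqrt_nonneg _), ← Real.sqrt_mul (by positivity),
    show 2 / kp * (2 * kp) = 2 ^ 2 by field_simp, Real.sqrt_sq zero_le_two]

lemma lhs_eq_Sc {kp : ℝ} (hkp : 0 < kp) {α β : ℝ} (hα₀ : 0 < Real.sin α)
    (hα₁ : Real.sin α < Real.cos α) (hβs : 0 < Real.sin β) (hβc : 0 < Real.cos β) (s : ℝ) :
    (Real.sqrt (2 / kp) : ℂ) * ω₋ * Hth kp (β + α) (β - α) s *
        Hth kp (β + α) (π - (β - α)) s * csqrt (s - sbs kp (β - α) (β + α)) *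
        csqrt (s - sb kp (β - α) (β + α))
      = Sc (cos (zetaF kp (β + α) s)) (Real.cos (β - α)) := by
  have hQ := Qf_im (kp := kp) s
  have hc : ((Real.sqrt (2 / kp) : ℝ) : ℂ)
      * ((Real.sqrt (Real.sqrt (2 * kp)) : ℝ) * (Real.sqrt (Real.sqrt (2 * kp)) : ℝ)) = 2 := by
    exact_mod_cast congrArg ofReal (sqrt_two_div_mul_sqrt_sqrt_two_mul_mul_self hkp)
  rw [Hth_sub_eq hkp, Hth_pi_sub_eq hkp, csqrt_sub_sbs hkp α hβc, csqrt_sub_sb hkp hα₀ β, zetaF,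
    ofReal_add, Sc_cos_two_mul_add _ _ _ (re_ωm_mul_sin_arcsinC_add_pos hQ hα₀)
      (re_ωm_mul_sin_arcsinC_add_pos hQ hβs) (re_ωm_mul_cos_arcsinC_add_pos hQ (hα₀.trans hα₁))
      (re_ωm_mul_cos_arcsinC_add_pos hQ hβc)]
  rw [mul_assoc 2, ← lhs_normalized_eq_prod_csqrt (Qf kp s) hQ hα₀ hα₁ hβs hβc, ← hc]
  ring

theorem statement17 (kp km : ℝ) (hkm : 0 < km) (hk : km < kp) (θx : ℝ)
    (hθ : θx ∈ Set.Ioo (Real.arccos (km / kp)) (Real.pi / 2)) :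
    ∀ s : ℝ,
      (Real.sqrt (2 / kp) : ℂ) * Complex.exp (-(Real.pi : ℂ) / 4 * Complex.I) *
          Hth kp θx (Real.arccos (km / kp)) (s : ℂ) *
          Hth kp θx (Real.pi - Real.arccos (km / kp)) (s : ℂ) *
          csqrt ((s : ℂ) - sbs kp (Real.arccos (km / kp)) θx) *
          csqrt ((s : ℂ) - sb kp (Real.arccos (km / kp)) θx)
        = Sc (Complex.cos (zetaF kp θx (s : ℂ))) (km / kp) := by
  intro s
  have hkp : 0 < kp := hkm.trans hk
  have hn₀ : 0 < km / kp := div_pos hkm hkp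
  have hn₁ : km / kp < 1 := (div_lt_one hkp).2 hk
  have hθc₀ := Real.arccos_pos.2 hn₁
  obtain ⟨hθx₀, hθx₁⟩ := hθ
  obtain ⟨α, β, rfl, hθc⟩ : ∃ α β : ℝ, θx = β + α ∧ Real.arccos (km / kp) = β - α :=
    ⟨(θx - Real.arccos (km / kp)) / 2, (θx + Real.arccos (km / kp)) / 2, by ring, by ring⟩
  have hαc : Real.sin α < Real.cos α := by
    rw [← Real.cos_pi_div_two_sub]
    exact Real.cos_lt_cos_of_nonneg_of_le_pi (by linarith) (by linarith) (by linarith)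
  have h := lhs_eq_Sc hkp (β := β) (Real.sin_pos_of_pos_of_lt_pi (by linarith) (by linarith)) hαc
    (Real.sin_pos_of_pos_of_lt_pi (by linarith) (by linarith))
    (Real.cos_pos_of_mem_Ioo ⟨by linarith, by linarith⟩) s
  rwa [← hθc, Real.cos_arccos (by linarith) hn₁.le] at h
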